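/- If (Xₙ) is the birth-death chain in environment ω started at 0, a, b ≥ 1 are integers, y > 0, and the potential V satisfies V(i) ≤ y - c for all 0 ≤ i ≤ a-1 and max_{-b ≤ i ≤ -1} V(i) ≥ y, then the probability that the chain hits -b before a is at most a·exp(-c). -/

import Mathlib

open MeasureTheory Set

noncomputable section

/-- The potential associated to an environment `ω : ℤ → ℝ`. -/
def pot (ω : ℤ → ℝ) (i : ℤ) : ℝ :=
  if 0 ≤ i then ∑ k ∈ Finset.Icc (1:ℤ) i, Real.log ((1 - ω k) / ω k)
  else -∑ k ∈ Finset.Icc (i + 1) (0:ℤ), Real.log ((1 - ω k) / ω k)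

end

/-!
Let `h z = (∑_{z ≤ i < a} e^{V i}) / (∑_{-b ≤ i < a} e^{V i})`. The identity
`ω z · e^{V z} = (1 - ω z) · e^{V (z-1)}` makes `h` harmonic for the chain at every `z ≠ a`, and
`h (-b) = 1`. Splitting a cylinder according to the next position, induction on the horizon `N`
shows that the mass of the paths in a cylinder ending at `z` which hit `-b` within `N` further
steps without visiting `a` is at most the mass of the cylinder times `h z`. Finally the
numerator of `h 0` is at most `a e^{y-c}` and its denominator at least `e^{V i} ≥ e^y` for the
`i ∈ [-b, -1]` with `V i ≥ y`.
-/

namespace BirthDeath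

open Real
open scoped ENNReal

theorem pot_eq_pot_sub_one_add_log (ω : ℤ → ℝ) (z : ℤ) :
    pot ω z = pot ω (z - 1) + log ((1 - ω z) / ω z) := by
  rcases lt_trichotomy z 0 with hz | rfl | hz
  · have h := Finset.insert_Icc_succ_left_eq_Icc (show z ≤ 0 by omega)
    rw [Order.succ_eq_add_one] at h
    rw [pot, pot, if_neg (by omega), if_neg (by omega), sub_add_cancel, ← h,
      Finset.sum_insert (by simp)]
    ring
  · simp [pot]
  · have h := Finset.insert_Icc_pred_right_eq_Icc (show 1 ≤ z by omega)
    rw [Order.pred_eq_sub_one] at h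
    rw [pot, pot, if_pos hz.le, if_pos (by omega), ← h, Finset.sum_insert (by simp)]
    ring

theorem mul_exp_pot {ω : ℤ → ℝ} {z : ℤ} (h0 : 0 < ω z) (h1 : ω z < 1) :
    ω z * exp (pot ω z) = (1 - ω z) * exp (pot ω (z - 1)) := by
  rw [pot_eq_pot_sub_one_add_log, exp_add, exp_log (div_pos (by linarith) h0)]
  field_simp

theorem sum_Ico_eq_add_sum_Ico_add_one {M : Type*} [AddCommMonoid M] {a b : ℤ} (h : a < b)
    (f : ℤ → M) : ∑ i ∈ Finset.Ico a b, f i = f a + ∑ i ∈ Finset.Ico (a + 1) b, f i := by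
  rw [← Order.succ_eq_add_one, ← Finset.insert_Ico_succ_left_eq_Ico h,
    Finset.sum_insert (by simp)]

noncomputable def lowerExitProb (ω : ℤ → ℝ) (lo hi z : ℤ) : ℝ :=
  (∑ i ∈ Finset.Ico z hi, exp (pot ω i)) / ∑ i ∈ Finset.Ico lo hi, exp (pot ω i)

section LowerExitProb

variable {ω : ℤ → ℝ} {lo hi : ℤ}

theorem lowerExitProb_nonneg (z : ℤ) : 0 ≤ lowerExitProb ω lo hi z := by
  unfold lowerExitProb
  positivity

theorem lowerExitProb_self (h : lo < hi) : lowerExitProb ω lo hi lo = 1 :=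
  div_self (Finset.sum_pos (fun _ _ => exp_pos _) (Finset.nonempty_Ico.mpr h)).ne'

theorem sum_exp_pot_harmonic {z : ℤ} (h0 : 0 < ω z) (h1 : ω z < 1) (hz : z ≠ hi) :
    ω z * ∑ i ∈ Finset.Ico (z + 1) hi, exp (pot ω i)
      + (1 - ω z) * ∑ i ∈ Finset.Ico (z - 1) hi, exp (pot ω i)
      = ∑ i ∈ Finset.Ico z hi, exp (pot ω i) := by
  rcases lt_or_gt_of_ne hz with hz | hz
  · have hstep := sum_Ico_eq_add_sum_Ico_add_one hz (fun i => exp (pot ω i))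
    have hprev := sum_Ico_eq_add_sum_Ico_add_one (show z - 1 < hi by omega)
      (fun i => exp (pot ω i))
    rw [sub_add_cancel] at hprev
    linear_combination (1 - ω z) * hprev - ω z * hstep - mul_exp_pot h0 h1
  · rw [Finset.Ico_eq_empty_of_le hz.le, Finset.Ico_eq_empty_of_le (by omega : hi ≤ z + 1),
      Finset.Ico_eq_empty_of_le (by omega : hi ≤ z - 1)]
    simp

theorem lowerExitProb_harmonic {z : ℤ} (h0 : 0 < ω z) (h1 : ω z < 1) (hz : z ≠ hi) :
    ω z * lowerExitProb ω lo hi (z + 1) + (1 - ω z) * lowerExitProb ω lo hi (z - 1)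
      = lowerExitProb ω lo hi z := by
  simp only [lowerExitProb, mul_div_assoc', ← add_div, sum_exp_pot_harmonic h0 h1 hz]

theorem lowerExitProb_le_mul_exp_neg {z i₀ : ℤ} {y c : ℝ} (hz : z ≤ hi)
    (hupper : ∀ i, z ≤ i → i < hi → pot ω i ≤ y - c)
    (hi₀ : i₀ ∈ Finset.Ico lo hi) (hy : y ≤ pot ω i₀) :
    lowerExitProb ω lo hi z ≤ ((hi : ℝ) - z) * exp (-c) := by
  have hnum : ∑ i ∈ Finset.Ico z hi, exp (pot ω i) ≤ ((hi : ℝ) - z) * exp (y - c) := by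
    calc ∑ i ∈ Finset.Ico z hi, exp (pot ω i)
        ≤ (Finset.Ico z hi).card • exp (y - c) :=
          Finset.sum_le_card_nsmul _ _ _ fun i hmem => exp_le_exp.mpr <|
            hupper i (Finset.mem_Ico.mp hmem).1 (Finset.mem_Ico.mp hmem).2
      _ = ((hi : ℝ) - z) * exp (y - c) := by
          rw [Int.card_Ico, nsmul_eq_mul, ← Int.cast_natCast, Int.toNat_of_nonneg (by omega)]
          push_cast; ring
  have hden : exp y ≤ ∑ i ∈ Finset.Ico lo hi, exp (pot ω i) :=
    (exp_le_exp.mpr hy).trans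
      (Finset.single_le_sum (fun i _ => (exp_pos (pot ω i)).le) hi₀)
  calc lowerExitProb ω lo hi z ≤ ((hi : ℝ) - z) * exp (y - c) / exp y :=
        div_le_div₀ (mul_nonneg (sub_nonneg.mpr (Int.cast_le.mpr hz)) (exp_pos _).le)
          hnum (exp_pos y) hden
    _ = ((hi : ℝ) - z) * exp (-c) := by
        rw [sub_eq_add_neg y, exp_add]; field_simp

end LowerExitProb

noncomputable def stepProb (ω : ℤ → ℝ) (u v : ℤ) : ℝ≥0∞ :=
  if v = u + 1 then ENNReal.ofReal (ω u)
  else if v = u - 1 then ENNReal.ofReal (1 - ω u) else 0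

def cyl (n : ℕ) (p : ℕ → ℤ) : Set (ℕ → ℤ) := {x | ∀ i ≤ n, x i = p i}

def IsBirthDeathLaw (ω : ℤ → ℝ) (P : Measure (ℕ → ℤ)) : Prop :=
  ∀ (n : ℕ) (p : ℕ → ℤ), p 0 = 0 →
    P (cyl n p) = ∏ i ∈ Finset.range n, stepProb ω (p i) (p (i + 1))

def hitBefore (t s : ℤ) (n N : ℕ) : Set (ℕ → ℤ) :=
  {x | ∃ m ≤ N, x (n + m) = t ∧ ∀ k ≤ m, x (n + k) ≠ s}

theorem tsum_stepProb_mul {ω : ℤ → ℝ} {z : ℤ} (h0 : 0 ≤ ω z) (h1 : ω z ≤ 1) {g : ℤ → ℝ}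
    (hg : ∀ v, 0 ≤ g v) :
    ∑' v, stepProb ω z v * ENNReal.ofReal (g v)
      = ENNReal.ofReal (ω z * g (z + 1) + (1 - ω z) * g (z - 1)) := by
  have hne : z + 1 ≠ z - 1 := by omega
  rw [tsum_eq_sum (s := {z + 1, z - 1}), Finset.sum_pair hne,
    ENNReal.ofReal_add (mul_nonneg h0 (hg _)) (mul_nonneg (by linarith) (hg _)),
    ENNReal.ofReal_mul h0, ENNReal.ofReal_mul (by linarith)]
  · simp [stepProb, hne.symm]
  · intro v hv
    simp only [Finset.mem_insert, Finset.mem_singleton, not_or] at hv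
    simp [stepProb, hv.1, hv.2]

section Cylinders

variable {ω : ℤ → ℝ} {P : Measure (ℕ → ℤ)}

theorem mem_cyl_update_succ {n : ℕ} {p x : ℕ → ℤ} (hx : x ∈ cyl n p) :
    x ∈ cyl (n + 1) (Function.update p (n + 1) (x (n + 1))) := by
  intro i hi
  rcases (show i ≤ n ∨ i = n + 1 by omega) with hi | rfl
  · rw [Function.update_of_ne (by omega)]
    exact hx i hi
  · rw [Function.update_self]

theorem measure_cyl_update_succ (hlaw : IsBirthDeathLaw ω P) {n : ℕ} {p : ℕ → ℤ}
    (hp : p 0 = 0) (v : ℤ) :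
    P (cyl (n + 1) (Function.update p (n + 1) v)) = P (cyl n p) * stepProb ω (p n) v := by
  have hq : ∀ i ≤ n, Function.update p (n + 1) v i = p i :=
    fun i hi => Function.update_of_ne (by omega) _ _
  rw [hlaw (n + 1) _ (by rw [hq 0 n.zero_le, hp]), hlaw n p hp, Finset.prod_range_succ,
    hq n le_rfl, Function.update_self]
  congr 1
  exact Finset.prod_congr rfl fun i hi => by
    rw [hq i (Finset.mem_range.mp hi).le, hq (i + 1) (Finset.mem_range.mp hi)]

section HitBefore

variable {t s : ℤ} {n N : ℕ} {p x : ℕ → ℤ}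

theorem hitBefore_mono (t s : ℤ) (n : ℕ) : Monotone (hitBefore t s n) := by
  rintro N M hNM x ⟨m, hm, hmt, hms⟩
  exact ⟨m, hm.trans hNM, hmt, hms⟩

theorem setOf_hit_eq_iUnion_hitBefore (t s : ℤ) :
    {x : ℕ → ℤ | ∃ n, x n = t ∧ ∀ m ≤ n, x m ≠ s} = ⋃ N, hitBefore t s 0 N := by
  ext x
  simp only [hitBefore, zero_add, mem_ofPred_eq, mem_iUnion]
  exact ⟨fun ⟨n, h⟩ => ⟨n, n, le_rfl, h⟩, fun ⟨_, n, _, h⟩ => ⟨n, h⟩⟩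

theorem cyl_inter_hitBefore_zero (h : p n ≠ t) : cyl n p ∩ hitBefore t s n 0 = ∅ := by
  refine eq_empty_of_forall_notMem ?_
  rintro x ⟨hx, m, hm, hmt, -⟩
  obtain rfl : m = 0 := Nat.le_zero.mp hm
  exact h (hx n le_rfl ▸ hmt)

theorem cyl_inter_hitBefore_of_eq (h : p n = s) : cyl n p ∩ hitBefore t s n N = ∅ := by
  refine eq_empty_of_forall_notMem ?_
  rintro x ⟨hx, m, -, -, hms⟩
  exact hms 0 m.zero_le (hx n le_rfl ▸ h)

theorem cyl_inter_hitBefore_succ_subset (h : p n ≠ t) :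
    cyl n p ∩ hitBefore t s n (N + 1)
      ⊆ ⋃ v, cyl (n + 1) (Function.update p (n + 1) v) ∩ hitBefore t s (n + 1) N := by
  rintro x ⟨hx, m, hm, hmt, hms⟩
  refine mem_iUnion.mpr ⟨x (n + 1), mem_cyl_update_succ hx, ?_⟩
  obtain ⟨m, rfl⟩ : ∃ m', m = m' + 1 := by
    refine Nat.exists_eq_add_one.mpr (Nat.pos_of_ne_zero ?_)
    rintro rfl
    exact h (by simpa [hx n le_rfl] using hmt)
  refine ⟨m, by omega, by rwa [add_right_comm], fun k hk => ?_⟩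
  rw [add_right_comm, add_assoc]
  exact hms (k + 1) (by omega)

end HitBefore

theorem measure_cyl_inter_hitBefore_le (hω : ∀ x, 0 < ω x ∧ ω x < 1)
    (hlaw : IsBirthDeathLaw ω P) {lo hi : ℤ} (hlo : lo < hi) (N : ℕ) {n : ℕ} {p : ℕ → ℤ}
    (hp : p 0 = 0) :
    P (cyl n p ∩ hitBefore lo hi n N)
      ≤ P (cyl n p) * ENNReal.ofReal (lowerExitProb ω lo hi (p n)) := by
  have bound_of_eq_lo : ∀ n p (S : Set (ℕ → ℤ)), p n = lo →
      P (cyl n p ∩ S) ≤ P (cyl n p) * ENNReal.ofReal (lowerExitProb ω lo hi (p n)) := by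
    intro n p S h
    rw [h, lowerExitProb_self hlo, ENNReal.ofReal_one, mul_one]
    exact measure_mono inter_subset_left
  induction N generalizing n p with
  | zero =>
    by_cases h : p n = lo
    · exact bound_of_eq_lo n p _ h
    · simp [cyl_inter_hitBefore_zero h]
  | succ N ih =>
    by_cases h : p n = lo
    · exact bound_of_eq_lo n p _ h
    by_cases h' : p n = hi
    · simp [cyl_inter_hitBefore_of_eq h']
    have h0 := (hω (p n)).1
    have h1 := (hω (p n)).2
    calc P (cyl n p ∩ hitBefore lo hi n (N + 1))
        ≤ P (⋃ v, cyl (n + 1) (Function.update p (n + 1) v) ∩ hitBefore lo hi (n + 1) N) :=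
          measure_mono (cyl_inter_hitBefore_succ_subset h)
      _ ≤ ∑' v, P (cyl (n + 1) (Function.update p (n + 1) v) ∩ hitBefore lo hi (n + 1) N) :=
          measure_iUnion_le _
      _ ≤ ∑' v, P (cyl n p) * (stepProb ω (p n) v * ENNReal.ofReal (lowerExitProb ω lo hi v)) :=
          ENNReal.tsum_le_tsum fun v => by
            have := ih (n := n + 1) (p := Function.update p (n + 1) v)
              (by rw [Function.update_of_ne (by omega), hp])
            rwa [measure_cyl_update_succ hlaw hp, Function.update_self, mul_assoc] at this
      _ = P (cyl n p) * ENNReal.ofReal (lowerExitProb ω lo hi (p n)) := by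
          rw [ENNReal.tsum_mul_left, tsum_stepProb_mul h0.le h1.le lowerExitProb_nonneg,
            lowerExitProb_harmonic h0 h1 h']

theorem measurableSet_cyl (n : ℕ) (p : ℕ → ℤ) : MeasurableSet (cyl n p) := by
  simp only [cyl, ofPred_forall]
  exact .iInter fun i => .iInter fun _ =>
    measurableSet_eq_fun (measurable_pi_apply i) measurable_const

theorem measure_hit_le [IsProbabilityMeasure P] (hω : ∀ x, 0 < ω x ∧ ω x < 1)
    (hlaw : IsBirthDeathLaw ω P) {lo hi : ℤ} (hlo : lo < hi) :
    P {x | ∃ n, x n = lo ∧ ∀ m ≤ n, x m ≠ hi} ≤ ENNReal.ofReal (lowerExitProb ω lo hi 0) := by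
  have hstart : P (cyl 0 0) = 1 := hlaw 0 0 rfl
  rw [setOf_hit_eq_iUnion_hitBefore, (hitBefore_mono lo hi 0).measure_iUnion]
  refine iSup_le fun N => ?_
  calc P (hitBefore lo hi 0 N) = P (hitBefore lo hi 0 N ∩ cyl 0 0) :=
        (measure_inter_conull ((prob_compl_eq_zero_iff (measurableSet_cyl 0 0)).mpr hstart)).symm
    _ ≤ P (cyl 0 0) * ENNReal.ofReal (lowerExitProb ω lo hi 0) := by
        rw [inter_comm]
        exact measure_cyl_inter_hitBefore_le hω hlaw hlo N rfl
    _ = ENNReal.ofReal (lowerExitProb ω lo hi 0) := by rw [hstart, one_mul]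

end Cylinders

end BirthDeath

theorem stmt1_general (ω : ℤ → ℝ) (hω : ∀ x : ℤ, 0 < ω x ∧ ω x < 1)
    (P : Measure (ℕ → ℤ)) [IsProbabilityMeasure P]
    (hP : ∀ (n : ℕ) (p : ℕ → ℤ), p 0 = 0 →
      P {x | ∀ i ≤ n, x i = p i} =
        ∏ i ∈ Finset.range n,
          (if p (i + 1) = p i + 1 then ENNReal.ofReal (ω (p i))
           else if p (i + 1) = p i - 1 then ENNReal.ofReal (1 - ω (p i)) else 0))
    (a b : ℤ) (ha : 1 ≤ a) (y c : ℝ)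
    (hupper : ∀ i : ℤ, 0 ≤ i → i ≤ a - 1 → pot ω i ≤ y - c)
    (hmax : ∃ i : ℤ, -b ≤ i ∧ i ≤ -1 ∧ y ≤ pot ω i) :
    P {x | ∃ n : ℕ, x n = -b ∧ ∀ m ≤ n, x m ≠ a} ≤
      ENNReal.ofReal ((a : ℝ) * Real.exp (-c)) := by
  obtain ⟨i₀, hbi₀, hi₀, hy⟩ := hmax
  refine (BirthDeath.measure_hit_le hω hP (by omega)).trans (ENNReal.ofReal_le_ofReal ?_)
  simpa using BirthDeath.lowerExitProb_le_mul_exp_neg (lo := -b) (z := 0) (by omega)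
    (fun i h0 hia => hupper i h0 (by omega)) (Finset.mem_Ico.mpr ⟨hbi₀, by omega⟩) hy

/-- If the potential stays below `y - c` on `[0, a-1]` and reaches `y` somewhere in
`[-b, -1]`, then the chain started at `0` hits `-b` before `a` with probability
at most `a · exp (-c)`. -/
theorem stmt1 (ω : ℤ → ℝ) (hω : ∀ x : ℤ, 0 < ω x ∧ ω x < 1)
    (P : Measure (ℕ → ℤ)) [IsProbabilityMeasure P]
    (hP : ∀ (n : ℕ) (p : ℕ → ℤ), p 0 = 0 →
      P {x | ∀ i ≤ n, x i = p i} =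
        ∏ i ∈ Finset.range n,
          (if p (i + 1) = p i + 1 then ENNReal.ofReal (ω (p i))
           else if p (i + 1) = p i - 1 then ENNReal.ofReal (1 - ω (p i)) else 0))
    (a b : ℤ) (ha : 1 ≤ a) (hb : 1 ≤ b) (y c : ℝ) (hy : 0 < y)
    (hupper : ∀ i : ℤ, 0 ≤ i → i ≤ a - 1 → pot ω i ≤ y - c)
    (hmax : ∃ i : ℤ, -b ≤ i ∧ i ≤ -1 ∧ y ≤ pot ω i) :
    P {x | ∃ n : ℕ, x n = -b ∧ ∀ m ≤ n, x m ≠ a} ≤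
      ENNReal.ofReal ((a : ℝ) * Real.exp (-c)) :=
  stmt1_general ω hω P hP a b ha y c hupper hmax
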